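/- arXiv:1501.06320 — 6 statements merged into one kernel-verified Lean document; each statement's English description precedes it below -/
import Mathlib

section
/- If a graph H is not bipartite, then for any graph F with maximum degree at most 2Δ(H)−1, there exists a 2-coloring of the edges of F with no monochromatic copy of H. In other words, every Ramsey graph for a non-bipartite graph H has maximum degree at least 2Δ(H). -/
open SimpleGraph

/-- `H` has a copy (injective homomorphism image) in `G`. -/
def Contains {V W : Type*} (G : SimpleGraph V) (H : SimpleGraph W) : Prop :=
  ∃ f : W → V, Function.Injective f ∧ ∀ a b, H.Adj a b → G.Adj (f a) (f b)

/-- There is a copy of `H` in `G` all of whose edges get color `b` under the 2-coloring `c`. -/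
def IsMonoCopyIn {V W : Type*} (H : SimpleGraph W) (G : SimpleGraph V)
    (c : Sym2 V → Bool) (b : Bool) : Prop :=
  ∃ f : W → V, Function.Injective f ∧
    ∀ a a', H.Adj a a' → G.Adj (f a) (f a') ∧ c s(f a, f a') = b

/-- `G` arrows `H`: every 2-coloring of the edges of `G` has a monochromatic copy of `H`. -/
def Arrows {V W : Type*} (G : SimpleGraph V) (H : SimpleGraph W) : Prop :=
  ∀ c : Sym2 V → Bool, ∃ b, IsMonoCopyIn H G c b

/-- The Turán extremal number: the largest number of edges of an `n`-vertex `H`-free graph. -/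
noncomputable def exNum {W : Type*} (n : ℕ) (H : SimpleGraph W) : ℕ :=
  sSup {m | ∃ G : SimpleGraph (Fin n), ¬ Contains G H ∧ G.edgeSet.ncard = m}

/-!
Split `V` by `σ : V → Bool` so as to minimise the number of adjacent pairs on the same side, i.e.
take a maximum cut. Flipping the side of one vertex `v` changes that number by
`2 (deg v - 2 same(v))`, so by minimality every vertex has at most `deg v / 2 ≤ Δ(H) - 1/2`
neighbours on its own side. Colour an edge by whether its ends lie on the same side. A copy of
`H` among the crossing edges would 2-colour `H`, and a copy among the same-side edges would give
the image of a vertex of maximum degree in `H` at least `Δ(H)` neighbours on its own side.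
-/

open Finset

namespace SimpleGraph

variable {V : Type*} [Fintype V] (F : SimpleGraph V) [DecidableRel F.Adj]

def sameSideDegree (σ : V → Bool) (v : V) : ℕ := #{w | F.Adj v w ∧ σ v = σ w}

def sameSidePairs (σ : V → Bool) : ℕ := ∑ v, F.sameSideDegree σ v

variable [DecidableEq V]

lemma sameSideDegree_update_not_add (σ : V → Bool) (v : V) :
    F.sameSideDegree (Function.update σ v (!σ v)) v + F.sameSideDegree σ v = F.degree v := by
  have hflip :
      F.sameSideDegree (Function.update σ v (!σ v)) v = #{w | F.Adj v w ∧ ¬ σ v = σ w} := by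
    unfold sameSideDegree
    congr 1
    ext w
    by_cases hw : w = v
    · subst hw; simp
    · simp only [mem_filter, mem_univ, true_and, Function.update_of_ne hw, Function.update_self]
      cases σ v <;> cases σ w <;> simp
  rw [hflip, sameSideDegree, ← card_neighborFinset_eq_degree, add_comm, ← filter_filter,
    ← filter_filter, card_filter_add_card_filter_not]
  congr 1; ext; simp

lemma sameSidePairs_update_not (σ : V → Bool) (v : V) :
    F.sameSidePairs (Function.update σ v (!σ v)) + 2 * F.sameSideDegree σ v
      = F.sameSidePairs σ + 2 * F.sameSideDegree (Function.update σ v (!σ v)) v := by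
  let t : (V → Bool) → V → V → ℕ := fun τ u w => if F.Adj u w ∧ τ u = τ w then 1 else 0
  have hdeg (τ : V → Bool) (u : V) : F.sameSideDegree τ u = ∑ w, t τ u w := by
    rw [sameSideDegree, card_filter]
  have hdeg' (τ : V → Bool) : F.sameSideDegree τ v = ∑ u, t τ u v := by
    simp only [hdeg, t, F.adj_comm v, eq_comm (a := τ v)]
  set σ' := Function.update σ v (!σ v)
  -- only pairs through `v` can change status, and the correction terms count exactly those
  have key : ∀ u w, t σ' u w + (if u = v then t σ u w else 0) + (if w = v then t σ u w else 0)
      = t σ u w + (if u = v then t σ' u w else 0) + (if w = v then t σ' u w else 0) := by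
    intro u w
    by_cases hu : u = v <;> by_cases hw : w = v
    · subst hu hw; simp [t]
    · simp only [hu, hw, ↓reduceIte]; omega
    · simp only [hu, hw, ↓reduceIte]; omega
    · simp [t, σ', hu, hw, Function.update_of_ne]
  have hsum : ∑ u, ∑ w, (t σ' u w + (if u = v then t σ u w else 0) + (if w = v then t σ u w else 0))
      = ∑ u, ∑ w, (t σ u w + (if u = v then t σ' u w else 0) + (if w = v then t σ' u w else 0)) :=
    sum_congr rfl fun u _ => sum_congr rfl fun w _ => key u w
  simp only [sum_add_distrib, sum_ite_eq', mem_univ, if_true, sum_ite_irrel, sum_const_zero,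
    ← hdeg, ← hdeg'] at hsum
  rw [sameSidePairs, sameSidePairs]
  omega

lemma two_mul_sameSideDegree_le_degree {σ : V → Bool}
    (hσ : ∀ τ, F.sameSidePairs σ ≤ F.sameSidePairs τ) (v : V) :
    2 * F.sameSideDegree σ v ≤ F.degree v := by
  have := F.sameSidePairs_update_not σ v
  have := F.sameSideDegree_update_not_add σ v
  have := hσ (Function.update σ v (!σ v))
  omega

end SimpleGraph

def sameSideColoring {V : Type*} (σ : V → Bool) : Sym2 V → Bool :=
  Sym2.lift ⟨fun a b => decide (σ a = σ b), fun a b => by simp only [eq_comm]⟩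

section Copies

variable {V W : Type*} {H : SimpleGraph W} {F : SimpleGraph V} {σ : V → Bool}

lemma colorable_two_of_isMonoCopyIn_false (h : IsMonoCopyIn H F (sameSideColoring σ) false) :
    H.Colorable 2 := by
  obtain ⟨f, -, hf⟩ := h
  let C : H.Coloring Bool := Coloring.mk (σ ∘ f) fun hab => by
    simpa [sameSideColoring] using (hf _ _ hab).2
  simpa using C.colorable

lemma exists_degree_le_sameSideDegree_of_isMonoCopyIn_true [Fintype V] [DecidableRel F.Adj]
    [Fintype W] [DecidableRel H.Adj]
    (h : IsMonoCopyIn H F (sameSideColoring σ) true) (w : W) :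
    ∃ v, H.degree w ≤ F.sameSideDegree σ v := by
  obtain ⟨f, hf, hcopy⟩ := h
  refine ⟨f w, ?_⟩
  rw [← card_neighborFinset_eq_degree, ← card_map ⟨f, hf⟩, sameSideDegree]
  refine card_le_card fun u hu => ?_
  obtain ⟨w', hw', rfl⟩ := mem_map.mp hu
  obtain ⟨hadj, hcol⟩ := hcopy w w' ((H.mem_neighborFinset w w').mp hw')
  simpa [sameSideColoring, hadj] using hcol

end Copies

/-- If `H` is not bipartite, then any graph `F` with maximum degree at most
`2·Δ(H) − 1` admits a 2-edge-coloring with no monochromatic copy of `H`;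
hence every Ramsey graph of a non-bipartite `H` has maximum degree at least `2·Δ(H)`. -/
theorem stmt0 {V W : Type*} [Fintype V] [Fintype W]
    (H : SimpleGraph W) (F : SimpleGraph V)
    [DecidableRel H.Adj] [DecidableRel F.Adj]
    (hH : ¬ H.Colorable 2) (hF : F.maxDegree ≤ 2 * H.maxDegree - 1) :
    (∃ c : Sym2 V → Bool, ∀ b, ¬ IsMonoCopyIn H F c b) ∧ ¬ Arrows F H := by
  classical
  obtain ⟨σ, hσ⟩ := Finite.exists_min F.sameSidePairs
  have hbot : H ≠ ⊥ := fun h => hH ((colorable_one_iff.mpr h).mono one_le_two)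
  obtain ⟨a, -, -⟩ := ne_bot_iff_exists_adj.mp hbot
  have : Nonempty W := ⟨a⟩
  obtain ⟨w, hw⟩ := H.exists_maximal_degree_vertex
  have hΔ : H.maxDegree ≠ 0 := mt maxDegree_eq_zero_iff.mp hbot
  have hno : ∀ b, ¬ IsMonoCopyIn H F (sameSideColoring σ) b
    | false, h => hH (colorable_two_of_isMonoCopyIn_false h)
    | true, h => by
      obtain ⟨v, hv⟩ := exists_degree_le_sameSideDegree_of_isMonoCopyIn_true h w
      have := F.two_mul_sameSideDegree_le_degree hσ v
      have := F.degree_le_maxDegree v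
      omega
  exact ⟨⟨_, hno⟩, fun hArrows => (hArrows _).elim hno⟩
end

section
/- Every 2-coloring of the edges of the complete bipartite graph K_{5,5} contains a monochromatic copy of C_4 (the cycle on 4 vertices, equivalently K_{2,2}). -/
/-!
Some row of `K_{5,5}` has three edges of one colour `b`, to columns `S`. Every other row has at
most one `b`-edge into `S` (two would close a `b`-coloured `C₄` with the first row), hence a pair
of columns in `S` joined to it by edges of the other colour. Four rows but only three pairs in `S`:
two rows share their pair, and these two rows and two columns carry a `C₄` of the other colour.
-/

open SimpleGraph

open Finset

variable {α β : Type*}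

def HasMonoRectangle (f : α → β → Bool) (b : Bool) : Prop :=
  ∃ A : Finset α, ∃ W : Finset β, #A = 2 ∧ #W = 2 ∧ ∀ a ∈ A, ∀ w ∈ W, f a w = b

lemma hasMonoRectangle_or_not_of_row {f : α → β → Bool} {b : Bool}
    {v : α} {S : Finset β} {R : Finset α} (hS : 3 ≤ #S) (hvS : ∀ w ∈ S, f v w = b)
    (hvR : v ∉ R) (hR : (#S).choose 2 < #R) :
    HasMonoRectangle f b ∨ HasMonoRectangle f (!b) := by
  classical
  refine or_iff_not_imp_left.2 fun hb => ?_
  have hpair : ∀ u : R, ∃ W : S.powersetCard 2, ∀ w ∈ W.1, f u w = !b := by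
    intro ⟨u, hu⟩
    have hfew : #{w ∈ S | f u w = b} ≤ 1 := by
      by_contra! htwo
      obtain ⟨W, hWS, hW⟩ := exists_subset_card_eq (s := {w ∈ S | f u w = b}) htwo
      refine hb ⟨{v, u}, W, card_pair (ne_of_mem_of_not_mem hu hvR).symm, hW, ?_⟩
      simp only [mem_insert, mem_singleton, forall_eq_or_imp, forall_eq]
      exact ⟨fun w hw => hvS w (mem_filter.1 (hWS hw)).1,
        fun w hw => (mem_filter.1 (hWS hw)).2⟩
    have hmany : 2 ≤ #{w ∈ S | f u w = !b} := by
      have := card_filter_add_card_filter_not (s := S) (fun w => f u w = b)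
      simp only [← Bool.eq_not] at this
      omega
    obtain ⟨W, hWS, hW⟩ := exists_subset_card_eq hmany
    exact ⟨⟨W, mem_powersetCard.2 ⟨hWS.trans (filter_subset _ _), hW⟩⟩,
      fun w hw => (mem_filter.1 (hWS hw)).2⟩
  choose W hW using hpair
  obtain ⟨u, u', hne, hWeq⟩ := Fintype.exists_ne_map_eq_of_card_lt W (by simpa using hR)
  refine ⟨{u.1, u'.1}, W u, card_pair (Subtype.coe_ne_coe.2 hne),
    (mem_powersetCard.1 (W u).2).2, ?_⟩
  simp only [mem_insert, mem_singleton, forall_eq_or_imp, forall_eq]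
  exact ⟨hW u, hWeq ▸ hW u'⟩

lemma exists_hasMonoRectangle [Fintype α] [Fintype β] (hα : 5 ≤ Fintype.card α)
    (hβ : 5 ≤ Fintype.card β) (f : α → β → Bool) : ∃ b, HasMonoRectangle f b := by
  classical
  obtain ⟨v⟩ : Nonempty α := Fintype.card_pos_iff.1 (by omega)
  obtain ⟨b, -, hb⟩ := exists_lt_card_fiber_of_mul_lt_card_of_maps_to (s := univ) (t := univ)
    (f := f v) (n := 2) (fun _ _ => mem_univ _)
    (by rw [card_univ, card_univ, Fintype.card_bool]; omega)
  obtain ⟨S, hS, hS3⟩ := exists_subset_card_eq hb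
  have hR : (#S).choose 2 < #(univ.erase v) := by
    rw [hS3, card_erase_of_mem (mem_univ v), card_univ]
    simp only [Nat.choose_two_right]
    omega
  rcases hasMonoRectangle_or_not_of_row hS3.ge (fun w hw => (mem_filter.1 (hS hw)).2)
    (notMem_erase v univ) hR with h | h
  exacts [⟨b, h⟩, ⟨!b, h⟩]

lemma isMonoCopyIn_of_forall_mem {c : Sym2 (α ⊕ β) → Bool} {b : Bool} {A : Finset α}
    {W : Finset β} (hA : #A = 2) (hW : #W = 2)
    (h : ∀ a ∈ A, ∀ w ∈ W, c s(.inl a, .inr w) = b) :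
    IsMonoCopyIn (completeBipartiteGraph (Fin 2) (Fin 2)) (completeBipartiteGraph α β) c b := by
  let p : Fin 2 ≃ A := (Fintype.equivFinOfCardEq (by simpa using hA)).symm
  let q : Fin 2 ≃ W := (Fintype.equivFinOfCardEq (by simpa using hW)).symm
  refine ⟨Sum.map (fun i => (p i).1) (fun j => (q j).1),
    Sum.map_injective.2 ⟨Subtype.val_injective.comp p.injective,
      Subtype.val_injective.comp q.injective⟩, ?_⟩
  rintro (i | i) (j | j) hadj
  · simp at hadj
  · exact ⟨by simp, h _ (p i).2 _ (q j).2⟩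
  · exact ⟨by simp, Sym2.eq_swap ▸ h _ (p j).2 _ (q i).2⟩
  · simp at hadj

theorem arrows_completeBipartiteGraph_fin_two [Fintype α] [Fintype β]
    (hα : 5 ≤ Fintype.card α) (hβ : 5 ≤ Fintype.card β) :
    Arrows (completeBipartiteGraph α β) (completeBipartiteGraph (Fin 2) (Fin 2)) := by
  intro c
  obtain ⟨b, A, W, hA, hW, h⟩ := exists_hasMonoRectangle hα hβ fun a w => c s(.inl a, .inr w)
  exact ⟨b, isMonoCopyIn_of_forall_mem hA hW h⟩

/-- Every 2-coloring of the edges of `K_{5,5}` contains a monochromatic copy of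
`C₄ = K_{2,2}`. -/
theorem stmt5 :
    Arrows (completeBipartiteGraph (Fin 5) (Fin 5))
      (completeBipartiteGraph (Fin 2) (Fin 2)) :=
  arrows_completeBipartiteGraph_fin_two (by simp) (by simp)
end

section
/- If G is a graph with chromatic number χ(G) ≤ 2ω(G) − 2, where ω(G) is the clique number, then G is clique-splittable: its vertex set can be partitioned into two sets V1, V2 such that the induced subgraphs G[V1] and G[V2] each have clique number strictly less than ω(G). -/
/-!
Split the colour classes of a proper `(2ω - 2)`-colouring into two groups of `ω - 1` colours.
Each group induces an `(ω - 1)`-colourable subgraph, and a clique of an `m`-colourable graph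
has at most `m` vertices, so neither part contains a clique of size `ω`.
-/

open SimpleGraph

namespace SimpleGraph

variable {V : Type*} {G : SimpleGraph V}

theorem Colorable.cliqueNum_le {n : ℕ} (hc : G.Colorable n) : G.cliqueNum ≤ n := by
  obtain ⟨s, hs⟩ := G.exists_isNClique_cliqueNum
  exact hs.card_eq ▸ hs.isClique.card_le_of_colorable hc

theorem Colorable.two_le_of_adj {n : ℕ} (hc : G.Colorable n) {u v : V} (huv : G.Adj u v) :
    2 ≤ n := by
  exact_mod_cast (two_le_chromaticNumber_of_adj huv).trans hc.chromaticNumber_le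

theorem Colorable.exists_induce_colorable_induce_compl {a b : ℕ} (hc : G.Colorable (a + b)) :
    ∃ S : Set V, (G.induce S).Colorable a ∧ (G.induce Sᶜ).Colorable b := by
  obtain ⟨C, hC⟩ := (colorable_iff_exists_bdd_nat_coloring _).mp hc
  refine ⟨{v | C v < a}, ?_, ?_⟩
  · exact (colorable_iff_exists_bdd_nat_coloring _).mpr
      ⟨C.comp (Embedding.induce _).toHom, fun v => v.2⟩
  · have hge (v : ({v | C v < a}ᶜ : Set V)) : a ≤ C v := not_lt.mp v.2
    refine (colorable_iff_exists_bdd_nat_coloring _).mpr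
      ⟨Coloring.mk (fun v => C v - a) fun {v w} hvw hcol => C.valid hvw ?_, fun v => ?_⟩
    · have := hge v
      have := hge w
      change C v - a = C w - a at hcol
      change C v = C w
      omega
    · have := hge v
      have := hC v
      change C v - a < b
      omega

end SimpleGraph

theorem stmt10_general {V : Type*} (G : SimpleGraph V)
    (hedge : ∃ u v, G.Adj u v)
    (h : G.Colorable (2 * G.cliqueNum - 2)) :
    ∃ S : Set V, (G.induce S).cliqueNum < G.cliqueNum ∧
      (G.induce Sᶜ).cliqueNum < G.cliqueNum := by
  obtain ⟨u, v, huv⟩ := hedge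
  have hω : 2 ≤ 2 * G.cliqueNum - 2 := h.two_le_of_adj huv
  have hsplit : G.Colorable ((G.cliqueNum - 1) + (G.cliqueNum - 1)) := by
    convert h using 2
    omega
  obtain ⟨S, hS, hSc⟩ := hsplit.exists_induce_colorable_induce_compl
  have := hS.cliqueNum_le
  have := hSc.cliqueNum_le
  exact ⟨S, by omega, by omega⟩

/-- If `G` (with at least one edge) satisfies `χ(G) ≤ 2ω(G) − 2`, then `G` is
clique-splittable: its vertex set splits into two parts, each inducing a subgraph of
strictly smaller clique number. -/
theorem stmt10 {V : Type*} [Fintype V] (G : SimpleGraph V)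
    (hedge : ∃ u v, G.Adj u v)
    (h : G.Colorable (2 * G.cliqueNum - 2)) :
    ∃ S : Set V, (G.induce S).cliqueNum < G.cliqueNum ∧
      (G.induce Sᶜ).cliqueNum < G.cliqueNum :=
  stmt10_general G hedge h
end

section
/- Let F be a 4-regular graph with girth at least m+1. Then every 2-coloring of the edges of F contains a monochromatic path P_m on m vertices. (Hence the path P_m has a Ramsey graph of maximum degree 4.) -/
/-!
Split `F` into its two color classes. A 4-regular graph on `n` vertices has `2n` edges, so some
class has at least `n` edges and therefore contains a cycle, because a forest on `n` vertices has
fewer than `n` edges. That cycle is also a cycle of `F`, so it has at least `m + 1` vertices, and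
dropping one of them leaves a monochromatic path on at least `m` vertices.
-/

open SimpleGraph

open Finset

namespace SimpleGraph

variable {V : Type*} {G : SimpleGraph V}

lemma IsAcyclic.card_edgeFinset_lt [Fintype V] [Nonempty V] [Fintype G.edgeSet]
    (hG : G.IsAcyclic) : #G.edgeFinset < Fintype.card V := by
  classical
  obtain ⟨T, hGT, -, hT⟩ := connected_top.exists_isTree_le_of_le_of_isAcyclic le_top hG
  have hcard := hT.card_edgeFinset
  have hmono : #G.edgeFinset ≤ #T.edgeFinset := card_le_card (edgeFinset_mono hGT)
  omega

lemma IsRegularOfDegree.two_mul_card_edgeFinset [Fintype V] [DecidableRel G.Adj] {d : ℕ}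
    (hG : G.IsRegularOfDegree d) : 2 * #G.edgeFinset = d * Fintype.card V := by
  rw [← sum_degrees_eq_twice_card_edges, sum_congr rfl fun v _ ↦ hG v, sum_const, card_univ,
    smul_eq_mul, mul_comm]

lemma pathGraph_isContained_pathGraph {m n : ℕ} (h : m ≤ n) : pathGraph m ⊑ pathGraph n :=
  ⟨⟨⟨Fin.castLE h, fun hadj ↦ pathGraph_adj.mpr ((pathGraph_adj (n := m)).mp hadj)⟩,
    Fin.castLE_injective h⟩⟩

lemma pathGraph_girth_isContained (hG : ¬ G.IsAcyclic) : pathGraph G.girth ⊑ G := by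
  obtain ⟨_, w, hw, hlen⟩ := exists_girth_eq_length.mpr hG
  have := hw.isPath_tail.isContained_pathGraph
  rwa [w.length_tail_add_one hw.not_nil, ← hlen] at this

end SimpleGraph

def colorClass {V : Type*} (F : SimpleGraph V) (c : Sym2 V → Bool) (b : Bool) :
    SimpleGraph V where
  Adj x y := F.Adj x y ∧ c s(x, y) = b
  symm := ⟨fun _ _ h ↦ ⟨h.1.symm, Sym2.eq_swap ▸ h.2⟩⟩
  loopless := ⟨fun x h ↦ F.loopless.irrefl x h.1⟩

section colorClass

variable {V W : Type*} {F : SimpleGraph V} {c : Sym2 V → Bool}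

@[simp]
lemma colorClass_adj {b : Bool} {x y : V} :
    (colorClass F c b).Adj x y ↔ F.Adj x y ∧ c s(x, y) = b := Iff.rfl

instance [DecidableRel F.Adj] {b : Bool} : DecidableRel (colorClass F c b).Adj :=
  fun _ _ ↦ inferInstanceAs (Decidable (_ ∧ _))

lemma colorClass_le (b : Bool) : colorClass F c b ≤ F := fun _ _ ↦ And.left

lemma isMonoCopyIn_of_isContained_colorClass {H : SimpleGraph W} {b : Bool}
    (h : H ⊑ colorClass F c b) : IsMonoCopyIn H F c b :=
  let ⟨f⟩ := h
  ⟨f, f.injective, fun _ _ hadj ↦ f.toHom.map_adj hadj⟩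

lemma card_edgeFinset_le_colorClass_add [Fintype V] [DecidableEq V] [DecidableRel F.Adj] :
    #F.edgeFinset ≤ #(colorClass F c true).edgeFinset + #(colorClass F c false).edgeFinset := by
  refine (card_le_card fun e he ↦ ?_).trans (card_union_le _ _)
  induction e using Sym2.ind with
  | _ x y => cases h : c s(x, y) <;> simp_all

lemma exists_not_isAcyclic_colorClass [Fintype V] [Nonempty V] [DecidableEq V]
    [DecidableRel F.Adj] (c : Sym2 V → Bool) (hF : 2 * Fintype.card V ≤ #F.edgeFinset + 1) :
    ∃ b, ¬ (colorClass F c b).IsAcyclic := by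
  by_contra! hacyc
  have := (hacyc true).card_edgeFinset_lt
  have := (hacyc false).card_edgeFinset_lt
  have := card_edgeFinset_le_colorClass_add (F := F) (c := c)
  omega

end colorClass

/-- Every 2-coloring of the edges of a 4-regular graph of girth at least `m+1` contains
a monochromatic path on `m` vertices. -/
theorem stmt11 {V : Type*} [Fintype V] [Nonempty V]
    (F : SimpleGraph V) [DecidableRel F.Adj] (m : ℕ)
    (hreg : F.IsRegularOfDegree 4) (hg : (m + 1 : ℕ∞) ≤ F.girth) :
    Arrows F (SimpleGraph.pathGraph m) := by
  classical
  intro c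
  have hedges := hreg.two_mul_card_edgeFinset
  obtain ⟨b, hb⟩ := exists_not_isAcyclic_colorClass (F := F) c (by omega)
  have hgirth : m ≤ (colorClass F c b).girth :=
    calc m ≤ F.girth := by exact_mod_cast le_self_add.trans hg
      _ ≤ _ := girth_anti (colorClass_le b) hb
  exact ⟨b, isMonoCopyIn_of_isContained_colorClass <|
    (pathGraph_isContained_pathGraph hgirth).trans (pathGraph_girth_isContained hb)⟩
end

section
/- If an edge-transitive graph H is Ramsey equivalent to a graph G, and Γ is a minimal Ramsey graph for H, then for every edge e of Γ and every proper subgraph H' of H, the graph Γ − e is a Ramsey graph for H' but not for H. Consequently, an edge-transitive graph H is not Ramsey equivalent to any of its proper subgraphs. -/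
/-!
A monochromatic copy of `H` in `Γ` either avoids the edge `e`, or uses it as the image of exactly
one edge `xy` of `H`. In the second case, precompose the copy with an automorphism of `H` sending
an edge `uv` of `H` missing from `H'` to `xy`: the result is a monochromatic copy of `H` in which
only `uv` can land on `e`, so restricting it to `H'` gives a monochromatic copy of `H'` in `Γ − e`.
That `Γ − e` does not arrow `H` is minimality.
-/

open SimpleGraph

namespace SimpleGraph

variable {V W : Type*}

def IsEdgeTransitive (H : SimpleGraph W) : Prop :=
  ∀ e ∈ H.edgeSet, ∀ e' ∈ H.edgeSet, ∃ φ : H ≃g H, Sym2.map ⇑φ e = e'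

theorem deleteEdges_singleton_lt {G : SimpleGraph V} {e : Sym2 V} (he : e ∈ G.edgeSet) :
    G.deleteEdges {e} < G :=
  (deleteEdges_le _).lt_of_ne fun h =>
    Set.disjoint_singleton_right.1 (deleteEdges_eq_self.1 h) he

theorem exists_adj_not_adj_of_lt {H' H : SimpleGraph W} (h : H' < H) :
    ∃ u v, H.Adj u v ∧ ¬ H'.Adj u v := by
  by_contra! hcon
  exact h.2 hcon

end SimpleGraph

section MonoCopy

variable {V W : Type*} {H H' : SimpleGraph W} {Γ : SimpleGraph V} {c : Sym2 V → Bool} {b : Bool}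

theorem isMonoCopyIn_deleteEdges_singleton {e : Sym2 V} (f : W → V) (hf : Function.Injective f)
    (hmono : ∀ a a', H.Adj a a' → Γ.Adj (f a) (f a') ∧ c s(f a, f a') = b ∧ s(f a, f a') ≠ e) :
    IsMonoCopyIn H (Γ.deleteEdges {e}) c b :=
  ⟨f, hf, fun a a' ha =>
    let ⟨hadj, hc, hne⟩ := hmono a a' ha
    ⟨deleteEdges_adj.2 ⟨hadj, hne⟩, hc⟩⟩

theorem IsMonoCopyIn.exists_embedding_sending_only_edge_to (hET : H.IsEdgeTransitive)
    (h : IsMonoCopyIn H Γ c b) {u v : W} (huv : H.Adj u v) (e : Sym2 V) :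
    ∃ g : W → V, Function.Injective g ∧ ∀ a a', H.Adj a a' →
      Γ.Adj (g a) (g a') ∧ c s(g a, g a') = b ∧ (s(g a, g a') = e → s(a, a') = s(u, v)) := by
  obtain ⟨f, hf, hmono⟩ := h
  by_cases hhit : ∃ x y, H.Adj x y ∧ s(f x, f y) = e
  · obtain ⟨x, y, hxy, rfl⟩ := hhit
    obtain ⟨φ, hφ⟩ := hET s(u, v) huv s(x, y) hxy
    refine ⟨f ∘ φ, hf.comp φ.injective, fun a a' ha => ?_⟩
    obtain ⟨hadj, hc⟩ := hmono _ _ (φ.map_adj_iff.2 ha)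
    refine ⟨hadj, hc, fun hfe => Sym2.map.injective φ.injective ?_⟩
    have hφe : s(φ a, φ a') = s(x, y) := Sym2.map.injective hf (by simpa using hfe)
    simpa [hφ] using hφe
  · push Not at hhit
    exact ⟨f, hf, fun a a' ha => ⟨(hmono a a' ha).1, (hmono a a' ha).2,
      fun hfe => absurd hfe (hhit a a' ha)⟩⟩

theorem IsMonoCopyIn.deleteEdges_singleton_of_lt (hET : H.IsEdgeTransitive)
    (h : IsMonoCopyIn H Γ c b) (hH' : H' < H) (e : Sym2 V) :
    IsMonoCopyIn H' (Γ.deleteEdges {e}) c b := by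
  obtain ⟨u, v, huv, huv'⟩ := exists_adj_not_adj_of_lt hH'
  obtain ⟨g, hg, hmono⟩ := h.exists_embedding_sending_only_edge_to hET huv e
  refine isMonoCopyIn_deleteEdges_singleton g hg fun a a' ha => ?_
  obtain ⟨hadj, hc, hpre⟩ := hmono a a' (hH'.le ha)
  refine ⟨hadj, hc, fun hge => huv' ?_⟩
  rw [← mem_edgeSet, ← hpre hge]
  exact ha

theorem Arrows.deleteEdges_singleton_of_lt (hET : H.IsEdgeTransitive) (hΓ : Arrows Γ H)
    (hH' : H' < H) (e : Sym2 V) : Arrows (Γ.deleteEdges {e}) H' := fun c =>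
  let ⟨b, hb⟩ := hΓ c
  ⟨b, hb.deleteEdges_singleton_of_lt hET hH' e⟩

end MonoCopy

/-- Let `H` be edge-transitive and `Γ` a minimal Ramsey graph for `H`. Then for every
edge `e` of `Γ` and every proper subgraph `H'` of `H`, the graph `Γ − e` arrows `H'`
but does not arrow `H`; consequently `H` is not Ramsey equivalent to any of its proper
subgraphs. -/
theorem stmt14 {V W : Type*} (H : SimpleGraph W) (Γ : SimpleGraph V)
    (hET : ∀ e ∈ H.edgeSet, ∀ e' ∈ H.edgeSet, ∃ φ : H ≃g H, Sym2.map ⇑φ e = e')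
    (hΓ : Arrows Γ H)
    (hmin : ∀ Γ'' : SimpleGraph V, Γ'' < Γ → ¬ Arrows Γ'' H)
    (e : Sym2 V) (he : e ∈ Γ.edgeSet)
    (H' : SimpleGraph W) (hH' : H' < H) :
    Arrows (Γ.deleteEdges {e}) H' ∧ ¬ Arrows (Γ.deleteEdges {e}) H :=
  ⟨hΓ.deleteEdges_singleton_of_lt hET hH' e, hmin _ (deleteEdges_singleton_lt he)⟩
end

section
/- Let G be a complete graph K_{2Δ+1} with Δ ≥ 3, and let H be the graph obtained from the star K_{1,Δ} by adding an edge between two leaves (so Δ(H) = Δ and H is not bipartite). Then every 2-coloring of the edges of K_{2Δ+1} contains a monochromatic copy of H. -/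
/-!
Identify a 2-colouring of `K_n` with the graph `G` of its `true` edges, so that the `false` edges
form `Gᶜ`. If a vertex `v` of degree at least `d` lies on a triangle `vxy`, then `v`, `x`, `y` and
`d - 2` further neighbours of `v` span a copy of `starPlus d`. Since `2d + 1 ≥ 6`, `G` or `Gᶜ`
contains a triangle, say `vxy` in `G`. If `deg_G v < d`, then `v` has at least `d + 1`
neighbours in `Gᶜ`: either two of them are adjacent in `Gᶜ`, or they form a clique of `G` in
which every vertex has `G`-degree at least `d`.
-/

open SimpleGraph

/-- The graph obtained from the star `K_{1,d}` (center `0`, leaves `1,…,d`) by adding the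
edge between the leaves `1` and `2`. -/
def starPlus (d : ℕ) : SimpleGraph (Fin (d + 1)) :=
  SimpleGraph.fromEdgeSet ({e | (0 : Fin (d + 1)) ∈ e} ∪ {s(1, 2)})

lemma starPlus_adj {d : ℕ} {a b : Fin (d + 1)} (h : (starPlus d).Adj a b) :
    a = 0 ∨ b = 0 ∨ s(a, b) = s(1, 2) := by
  rw [starPlus, fromEdgeSet_adj] at h
  rcases h.1 with h | h
  · exact (Sym2.mem_iff.mp h).imp Eq.symm (Or.inl ∘ Eq.symm)
  · exact Or.inr (Or.inr h)

section

variable {V : Type*} [Fintype V] [DecidableEq V] {G : SimpleGraph V} [DecidableRel G.Adj]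

theorem contains_starPlus_of_le_degree {d : ℕ} (hd : 2 ≤ d) {v x y : V}
    (hx : G.Adj v x) (hy : G.Adj v y) (hxy : G.Adj x y) (hdeg : d ≤ G.degree v) :
    Contains G (starPlus d) := by
  obtain ⟨n, rfl⟩ := Nat.exists_eq_add_of_le' hd
  have hS : n ≤ (G.neighborFinset v \ {x, y}).card := by
    have := Finset.le_card_sdiff {x, y} (G.neighborFinset v)
    rw [card_neighborFinset_eq_degree] at this
    have := Finset.card_le_two (a := x) (b := y)
    omega
  obtain ⟨g⟩ : Nonempty (Fin n ↪ ↥(G.neighborFinset v \ {x, y})) :=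
    Function.Embedding.nonempty_of_card_le (by rwa [Fintype.card_fin, Fintype.card_coe])
  have hgS (i : Fin n) : (g i : V) ∈ G.neighborFinset v \ {x, y} := (g i).2
  simp only [Finset.mem_sdiff, mem_neighborFinset, Finset.mem_insert, Finset.mem_singleton,
    not_or] at hgS
  let f : Fin (n + 2 + 1) → V := Fin.cons v (Fin.cons x (Fin.cons y fun i => (g i : V)))
  have hf (i : Fin (n + 2)) : G.Adj v (f i.succ) := by
    cases i using Fin.cases with
    | zero => exact hx
    | succ i => cases i using Fin.cases with
      | zero => exact hy
      | succ i => exact (hgS i).1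
  refine ⟨f, ?_, fun a b hab => ?_⟩
  · refine Fin.cons_injective_of_injective (fun ⟨i, h⟩ => (hf i).ne h.symm) ?_
    refine Fin.cons_injective_of_injective ?_ ?_
    · rintro ⟨i, h⟩
      cases i using Fin.cases with
      | zero => exact hxy.ne' h
      | succ i => exact (hgS i).2.1 h
    · exact Fin.cons_injective_of_injective (fun ⟨i, h⟩ => (hgS i).2.2 h)
        (Subtype.val_injective.comp g.injective)
  · rcases starPlus_adj hab with rfl | rfl | h
    · obtain ⟨i, rfl⟩ := Fin.exists_succ_eq.2 hab.ne'
      exact hf i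
    · obtain ⟨i, rfl⟩ := Fin.exists_succ_eq.2 hab.ne
      exact (hf i).symm
    · rcases Sym2.eq_iff.1 h with ⟨rfl, rfl⟩ | ⟨rfl, rfl⟩
      · exact hxy
      · exact hxy.symm

theorem contains_starPlus_or_compl_of_lt_degree {d : ℕ} (hd : 2 ≤ d) {v : V}
    (hdeg : d < G.degree v) : Contains G (starPlus d) ∨ Contains Gᶜ (starPlus d) := by
  by_cases hN : ∃ x ∈ G.neighborFinset v, ∃ y ∈ G.neighborFinset v, G.Adj x y
  · obtain ⟨x, hx, y, hy, hxy⟩ := hN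
    rw [mem_neighborFinset] at hx hy
    exact .inl (contains_starPlus_of_le_degree hd hx hy hxy hdeg.le)
  push Not at hN
  obtain ⟨w, hw⟩ : (G.neighborFinset v).Nonempty := Finset.card_pos.1 (by simp; omega)
  have hsub : (G.neighborFinset v).erase w ⊆ Gᶜ.neighborFinset w := fun z hz => by
    rw [mem_neighborFinset, compl_adj]
    exact ⟨(Finset.ne_of_mem_erase hz).symm, hN w hw z (Finset.mem_of_mem_erase hz)⟩
  have hcard : d ≤ ((G.neighborFinset v).erase w).card := by
    rw [Finset.card_erase_of_mem hw, card_neighborFinset_eq_degree]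
    omega
  obtain ⟨x, hx, y, hy, hxy⟩ := Finset.one_lt_card.1 (one_lt_two.trans_le (hd.trans hcard))
  exact .inr (contains_starPlus_of_le_degree hd (mem_neighborFinset _ _ _ |>.1 (hsub hx))
    (mem_neighborFinset _ _ _ |>.1 (hsub hy))
    ⟨hxy, hN x (Finset.mem_of_mem_erase hx) y (Finset.mem_of_mem_erase hy)⟩
    ((hcard.trans (Finset.card_le_card hsub)).trans_eq (card_neighborFinset_eq_degree _ _)))

theorem contains_starPlus_or_compl_of_not_cliqueFree {d : ℕ} (hd : 2 ≤ d)
    (hV : 2 * d + 1 ≤ Fintype.card V) (hG : ¬ G.CliqueFree 3) :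
    Contains G (starPlus d) ∨ Contains Gᶜ (starPlus d) := by
  obtain ⟨t, ht⟩ := not_forall.1 hG
  obtain ⟨v, x, y, hx, hy, hxy, -⟩ := is3Clique_iff.1 (not_not.1 ht)
  by_cases hdeg : d ≤ G.degree v
  · exact .inl (contains_starPlus_of_le_degree hd hx hy hxy hdeg)
  have : d < Gᶜ.degree v := by rw [degree_compl]; omega
  simpa only [compl_compl, or_comm] using contains_starPlus_or_compl_of_lt_degree hd this

theorem not_cliqueFree_three_or_compl_of_two_lt_degree {v : V} (hdeg : 2 < G.degree v) :
    ¬ G.CliqueFree 3 ∨ ¬ Gᶜ.CliqueFree 3 := by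
  rw [← card_neighborFinset_eq_degree] at hdeg
  obtain ⟨x, hx, y, hy, z, hz, hxy, hxz, hyz⟩ := Finset.two_lt_card.1 hdeg
  rw [mem_neighborFinset] at hx hy hz
  have hv (a b : V) (ha : G.Adj v a) (hb : G.Adj v b) (hab : G.Adj a b) : ¬ G.CliqueFree 3 :=
    fun h => h {v, a, b} (is3Clique_triple_iff.2 ⟨ha, hb, hab⟩)
  by_cases h₁ : G.Adj x y; · exact .inl (hv x y hx hy h₁)
  by_cases h₂ : G.Adj x z; · exact .inl (hv x z hx hz h₂)
  by_cases h₃ : G.Adj y z; · exact .inl (hv y z hy hz h₃)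
  exact .inr fun h =>
    h {x, y, z} (is3Clique_triple_iff.2 ⟨⟨hxy, h₁⟩, ⟨hxz, h₂⟩, ⟨hyz, h₃⟩⟩)

theorem not_cliqueFree_three_or_compl (hV : 6 ≤ Fintype.card V) :
    ¬ G.CliqueFree 3 ∨ ¬ Gᶜ.CliqueFree 3 := by
  obtain ⟨v⟩ : Nonempty V := Fintype.card_pos_iff.1 (by omega)
  by_cases hdeg : 2 < G.degree v
  · exact not_cliqueFree_three_or_compl_of_two_lt_degree hdeg
  have : 2 < Gᶜ.degree v := by rw [degree_compl]; omega
  simpa only [compl_compl, or_comm] using not_cliqueFree_three_or_compl_of_two_lt_degree this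

theorem contains_starPlus_or_compl {d : ℕ} (hd : 3 ≤ d) (hV : 2 * d + 1 ≤ Fintype.card V) :
    Contains G (starPlus d) ∨ Contains Gᶜ (starPlus d) := by
  rcases not_cliqueFree_three_or_compl (G := G) (by omega) with hG | hG
  · exact contains_starPlus_or_compl_of_not_cliqueFree (by omega) hV hG
  · simpa only [compl_compl, or_comm] using
      contains_starPlus_or_compl_of_not_cliqueFree (by omega) hV hG

end

def colorGraph {V : Type*} (c : Sym2 V → Bool) (b : Bool) : SimpleGraph V :=
  fromEdgeSet {e | c e = b}

theorem compl_colorGraph {V : Type*} (c : Sym2 V → Bool) (b : Bool) :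
    (colorGraph c b)ᶜ = colorGraph c !b := by
  ext u w
  cases b <;> by_cases h : u = w <;> simp [colorGraph, h]

theorem isMonoCopyIn_top_iff {V W : Type*} {H : SimpleGraph W} {c : Sym2 V → Bool} {b : Bool} :
    IsMonoCopyIn H ⊤ c b ↔ Contains (colorGraph c b) H := by
  simp [IsMonoCopyIn, Contains, colorGraph, and_comm]

/-- For `d ≥ 3`, every 2-coloring of the edges of `K_{2d+1}` contains a monochromatic
copy of the star `K_{1,d}` with one extra edge between two leaves. -/
theorem stmt16 (d : ℕ) (hd : 3 ≤ d) :
    Arrows (⊤ : SimpleGraph (Fin (2 * d + 1))) (starPlus d) := by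
  classical
  intro c
  rcases contains_starPlus_or_compl (G := colorGraph c true) hd (by simp) with h | h
  · exact ⟨true, isMonoCopyIn_top_iff.2 h⟩
  · exact ⟨false, isMonoCopyIn_top_iff.2 (by simpa [compl_colorGraph] using h)⟩
end
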